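/- arXiv:2302.05902 — 2 statements merged into one kernel-verified Lean document; each statement's English description precedes it below -/
import Mathlib

section
/- Let N ≥ 5, ω = exp(2πi/N), and define ξ_{ij} ∈ ℂ^N as above. Suppose i ≠ k, j ≠ l, and (k−i)+(j−l) ≢ 0 (mod N). Then ⟨ξ_{ij}, ξ_{kl}⟩ = (1/N)(ω^{j−l} − 1)(1 − ω^{k−i}), and 0 < |⟨ξ_{ij}, ξ_{kl}⟩| ≤ 4/N < 1. -/
open Complex

/-- `ω = exp(2πi/N)`. -/
noncomputable def omegaN (N : ℕ) : ℂ := Complex.exp (2 * Real.pi * Complex.I / N)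

/-- The vector `ξ_{ij} ∈ ℂ^N`: coordinate `p` (for `p = 1, …, N`, encoded as `p : Fin N`
with value `p+1`) is `ω^{1-j}/√N` if `p = 1`, `ω^{i-1}/√N` if `p = N`,
and `ω^{p(i-j)}/√N` otherwise. -/
noncomputable def xiVec (N : ℕ) (i j : ℤ) : EuclideanSpace ℂ (Fin N) :=
  WithLp.toLp 2 fun (p : Fin N) =>
    if (p : ℕ) = 0 then omegaN N ^ (1 - j) / (Real.sqrt N : ℂ)
    else if (p : ℕ) = N - 1 then omegaN N ^ (i - 1) / (Real.sqrt N : ℂ)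
    else omegaN N ^ ((((p : ℕ) : ℤ) + 1) * (i - j)) / (Real.sqrt N : ℂ)

/-!
Coordinatewise, `conj (ξ_{ij})_p (ξ_{kl})_p` is `ω^{j-l}/N` at `p = 1`, `ω^{k-i}/N` at `p = N`
and `x^p/N` in between, where `x = ω^{(k-i)+(j-l)}`. As `x ≠ 1` is an `N`-th root of unity,
`∑_{p<N} x^p = 0`, so the middle coordinates contribute `(-1 - x)/N`; since
`x = ω^{j-l} ω^{k-i}`, the total factors as `(ω^{j-l} - 1)(1 - ω^{k-i})/N`. Both factors are
nonzero because `0 < |j - l|, |k - i| < N`, and each has modulus at most `2`.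
-/

open Finset

section Field

variable {K : Type*} [Field K]

theorem sum_range_pow_add_two_of_pow_eq_one {x : K} {n : ℕ} (hx : x ≠ 1)
    (hxn : x ^ (n + 2) = 1) : ∑ m ∈ range n, x ^ (m + 2) = -1 - x := by
  have hgeom : ∑ m ∈ range (n + 2), x ^ m = 0 := by
    rw [geom_sum_eq hx, hxn, sub_self, zero_div]
  rw [sum_range_succ', sum_range_succ'] at hgeom
  linear_combination hgeom

theorem IsPrimitiveRoot.zpow_ne_one_of_abs_lt {ζ : K} {n : ℕ} (hζ : IsPrimitiveRoot ζ n)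
    {z : ℤ} (hz : z ≠ 0) (hzn : |z| < n) : ζ ^ z ≠ 1 :=
  fun h => hz (Int.eq_zero_of_abs_lt_dvd ((hζ.zpow_eq_one_iff_dvd z).1 h) hzn)

end Field

theorem norm_sub_one_le_two {E : Type*} [SeminormedRing E] [NormOneClass E] {a : E}
    (ha : ‖a‖ = 1) : ‖a - 1‖ ≤ 2 :=
  (norm_sub_le a 1).trans_eq (by rw [ha, norm_one]; norm_num)

theorem conj_zpow_div_sqrt_mul_zpow_div_sqrt {ω : ℂ} (hω : ‖ω‖ = 1) (N : ℕ) (a b : ℤ) :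
    starRingEnd ℂ (ω ^ a / (Real.sqrt N : ℂ)) * (ω ^ b / (Real.sqrt N : ℂ)) =
      ω ^ (b - a) / N := by
  have hω0 : ω ≠ 0 := norm_ne_zero_iff.1 (hω ▸ one_ne_zero)
  have hsqrt : (Real.sqrt N : ℂ) * (Real.sqrt N : ℂ) = N := by
    rw [← ofReal_mul, Real.mul_self_sqrt N.cast_nonneg, ofReal_natCast]
  rw [map_div₀, map_zpow₀, conj_ofReal, ← inv_eq_conj hω, inv_zpow', div_mul_div_comm,
    ← zpow_add₀ hω0, hsqrt, neg_add_eq_sub]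

theorem omegaN_isPrimitiveRoot {N : ℕ} (hN : N ≠ 0) : IsPrimitiveRoot (omegaN N) N :=
  isPrimitiveRoot_exp N hN

/-- The exponent of `ω` in coordinate `m` (counted from `0`) of `√N • ξ_{ij}`. -/
def xiExponent (N : ℕ) (i j : ℤ) (m : ℕ) : ℤ :=
  if m = 0 then 1 - j else if m = N - 1 then i - 1 else (m + 1) * (i - j)

theorem xiExponent_zero (N : ℕ) (i j : ℤ) : xiExponent N i j 0 = 1 - j := if_pos rfl

theorem xiExponent_add_one_of_eq {N m : ℕ} (hm : m + 1 = N - 1) (i j : ℤ) :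
    xiExponent N i j (m + 1) = i - 1 := by
  rw [xiExponent, if_neg m.succ_ne_zero, if_pos hm]

theorem xiExponent_of_ne {N m : ℕ} (hm0 : m ≠ 0) (hmN : m ≠ N - 1) (i j : ℤ) :
    xiExponent N i j m = (m + 1) * (i - j) := by
  rw [xiExponent, if_neg hm0, if_neg hmN]

theorem xiVec_apply (N : ℕ) (i j : ℤ) (p : Fin N) :
    xiVec N i j p = omegaN N ^ xiExponent N i j p / (Real.sqrt N : ℂ) := by
  simp only [xiVec, xiExponent, PiLp.toLp_apply]
  split_ifs <;> rfl

theorem inner_xiVec (N : ℕ) (hN : 2 ≤ N) (i j k l : ℤ)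
    (hmod : ¬ (N : ℤ) ∣ (k - i) + (j - l)) :
    (inner ℂ (xiVec N i j) (xiVec N k l) : ℂ) =
      (1 / N) * (omegaN N ^ (j - l) - 1) * (1 - omegaN N ^ (k - i)) := by
  obtain ⟨n, rfl⟩ := Nat.exists_eq_add_of_le' hN
  have hζ : IsPrimitiveRoot (omegaN (n + 2)) (n + 2) := omegaN_isPrimitiveRoot (by omega)
  set ω := omegaN (n + 2)
  have hω0 : ω ≠ 0 := hζ.ne_zero (by omega)
  set x := ω ^ ((k - i) + (j - l)) with hx_def
  have hx : x ≠ 1 := fun h => hmod ((hζ.zpow_eq_one_iff_dvd _).1 h)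
  have hxn : x ^ (n + 2) = 1 := by
    rw [← zpow_natCast, ← zpow_mul, mul_comm, zpow_mul, zpow_natCast, hζ.pow_eq_one, one_zpow]
  have hmiddle : ∀ m ∈ range n,
      ω ^ (xiExponent (n + 2) k l (m + 1) - xiExponent (n + 2) i j (m + 1)) = x ^ (m + 2) := by
    intro m hm
    rw [mem_range] at hm
    rw [xiExponent_of_ne (by omega) (by omega), xiExponent_of_ne (by omega) (by omega),
      ← zpow_natCast, ← zpow_mul]
    congr 1
    push_cast
    ring
  calc (inner ℂ (xiVec (n + 2) i j) (xiVec (n + 2) k l) : ℂ)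
      = ∑ m ∈ range (n + 2),
          ω ^ (xiExponent (n + 2) k l m - xiExponent (n + 2) i j m) / ((n + 2 : ℕ) : ℂ) := by
        rw [PiLp.inner_apply, ← Fin.sum_univ_eq_sum_range]
        refine sum_congr rfl fun p _ => ?_
        rw [RCLike.inner_apply, xiVec_apply, xiVec_apply, mul_comm,
          conj_zpow_div_sqrt_mul_zpow_div_sqrt (hζ.norm'_eq_one (by omega))]
    _ = (ω ^ (j - l) + ∑ m ∈ range n, x ^ (m + 2) + ω ^ (k - i)) / ((n + 2 : ℕ) : ℂ) := by
        have hlast : n + 1 = n + 2 - 1 := rfl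
        rw [← sum_div, sum_range_succ, sum_range_succ', sum_congr rfl hmiddle, xiExponent_zero,
          xiExponent_zero, xiExponent_add_one_of_eq hlast, xiExponent_add_one_of_eq hlast,
          sub_sub_sub_cancel_left, sub_sub_sub_cancel_right]
        ring
    _ = _ := by
        rw [sum_range_pow_add_two_of_pow_eq_one hx hxn, hx_def, zpow_add₀ hω0]
        ring

theorem xiVec_inner_case_two (N : ℕ) (hN : 5 ≤ N) (i j k l : ℤ)
    (hi1 : 1 ≤ i) (hiN : i ≤ N) (hj1 : 1 ≤ j) (hjN : j ≤ N)
    (hk1 : 1 ≤ k) (hkN : k ≤ N) (hl1 : 1 ≤ l) (hlN : l ≤ N)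
    (hik : i ≠ k) (hjl : j ≠ l) (hmod : ¬ (N : ℤ) ∣ (k - i) + (j - l)) :
    (inner ℂ (xiVec N i j) (xiVec N k l) : ℂ) =
        (1 / N) * (omegaN N ^ (j - l) - 1) * (1 - omegaN N ^ (k - i))
    ∧ 0 < ‖(inner ℂ (xiVec N i j) (xiVec N k l) : ℂ)‖
    ∧ ‖(inner ℂ (xiVec N i j) (xiVec N k l) : ℂ)‖ ≤ 4 / (N : ℝ)
    ∧ 4 / (N : ℝ) < 1 := by
  have hζ : IsPrimitiveRoot (omegaN N) N := omegaN_isPrimitiveRoot (by omega)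
  have hunit (z : ℤ) : ‖omegaN N ^ z‖ = 1 := by
    rw [norm_zpow, hζ.norm'_eq_one (by omega), one_zpow]
  have hinner := inner_xiVec N (by omega) i j k l hmod
  have hjl' : omegaN N ^ (j - l) - 1 ≠ 0 := sub_ne_zero.2 <|
    hζ.zpow_ne_one_of_abs_lt (sub_ne_zero.2 hjl) (abs_sub_lt_iff.2 ⟨by omega, by omega⟩)
  have hki' : 1 - omegaN N ^ (k - i) ≠ 0 := sub_ne_zero.2 <| Ne.symm <|
    hζ.zpow_ne_one_of_abs_lt (sub_ne_zero.2 hik.symm) (abs_sub_lt_iff.2 ⟨by omega, by omega⟩)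
  refine ⟨hinner, ?_, ?_, ?_⟩
  · rw [hinner]
    have hN0 : (1 / N : ℂ) ≠ 0 := one_div_ne_zero (Nat.cast_ne_zero.2 (by omega))
    exact norm_pos_iff.2 (mul_ne_zero (mul_ne_zero hN0 hjl') hki')
  · rw [hinner, norm_mul, norm_mul, norm_sub_rev 1, norm_div, norm_one, norm_natCast]
    calc 1 / (N : ℝ) * ‖omegaN N ^ (j - l) - 1‖ * ‖omegaN N ^ (k - i) - 1‖
        ≤ 1 / N * 2 * 2 := by gcongr <;> exact norm_sub_one_le_two (hunit _)
      _ = 4 / N := by ring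
  · rw [div_lt_one (by positivity)]
    exact_mod_cast hN
end

section
/- Let N ≥ 5 and let v_{ij} = |ξ_{ij}⟩⟨ξ_{ij}| ∈ M_N(ℂ) be the flat magic unitary built from the magic basis ξ above. Then v_{ij} and v_{kl} commute if and only if i = k or j = l. -/
open Complex Matrix

/-- The matrix of the rank-one projection `|ξ_{ij}⟩⟨ξ_{ij}|` onto the span of `ξ_{ij}`:
`(v_{ij})_{pq} = ξ_{ij}(p) ⋅ conj (ξ_{ij}(q))`, so that `v_{ij} x = ⟨ξ_{ij}, x⟩ ξ_{ij}`. -/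
noncomputable def flatV (N : ℕ) (i j : Fin N) : Matrix (Fin N) (Fin N) ℂ :=
  Matrix.of fun p q =>
    xiVec N (((i : ℕ) : ℤ) + 1) (((j : ℕ) : ℤ) + 1) p *
      (starRingEnd ℂ) (xiVec N (((i : ℕ) : ℤ) + 1) (((j : ℕ) : ℤ) + 1) q)

/-!
Since `v_{ij} v_{kl} = ⟨ξ_{ij}, ξ_{kl}⟩ |ξ_{ij}⟩⟨ξ_{kl}|`, two of these rank-one projections
commute iff their vectors are orthogonal or proportional. Away from the first and last
coordinate, `conj ξ_{ij}(p) ξ_{kl}(p)` is a geometric progression, and summing it gives, with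
`u = ω^{j-l}` and `v = ω^{k-i}`,
`N ⟨ξ_{ij}, ξ_{kl}⟩ = N [uv = 1] - (u - 1)(v - 1)`.
As `|(u - 1)(v - 1)| ≤ 4 < N`, this vanishes iff exactly one of `u = 1`, `v = 1` holds, i.e.
iff exactly one of `i = k`, `j = l` holds. Finally, comparing the coordinates `p = 1, 2, 3`
shows that `ξ_{kl}` can only be proportional to `ξ_{ij}` when `j = l`.
-/

section RankOne

variable {𝕜 n : Type*} [Field 𝕜] [StarRing 𝕜] [Fintype n]

theorem vecMulVec_star_mul_vecMulVec_star (x y : n → 𝕜) :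
    vecMulVec x (star x) * vecMulVec y (star y) = (star x ⬝ᵥ y) • vecMulVec x (star y) := by
  rw [vecMulVec_mul_vecMulVec, vecMulVec_smul]

theorem commute_vecMulVec_star_of_dotProduct_eq_zero {x y : n → 𝕜} (h : star x ⬝ᵥ y = 0) :
    Commute (vecMulVec x (star x)) (vecMulVec y (star y)) := by
  have h' : star y ⬝ᵥ x = 0 := by rw [star_dotProduct, h, star_zero]
  rw [Commute, SemiconjBy, vecMulVec_star_mul_vecMulVec_star, vecMulVec_star_mul_vecMulVec_star,
    h, h', zero_smul, zero_smul]

theorem exists_eq_smul_of_commute_vecMulVec_star {x y : n → 𝕜}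
    (h : Commute (vecMulVec x (star x)) (vecMulVec y (star y))) (hxy : star x ⬝ᵥ y ≠ 0)
    (hx : x ≠ 0) : ∃ c : 𝕜, y = c • x := by
  obtain ⟨q, hq⟩ : ∃ q, x q ≠ 0 := Function.ne_iff.mp hx
  have hyx : star y ⬝ᵥ x = star (star x ⬝ᵥ y) := star_dotProduct y x
  refine ⟨(star x ⬝ᵥ y) * star (y q) / (star (star x ⬝ᵥ y) * star (x q)), funext fun p => ?_⟩
  have hpq := congrFun (congrFun h.eq p) q
  simp only [vecMulVec_star_mul_vecMulVec_star, hyx, Matrix.smul_apply, vecMulVec_apply,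
    Pi.star_apply, smul_eq_mul] at hpq
  have hden : star (star x ⬝ᵥ y) * star (x q) ≠ 0 :=
    mul_ne_zero (star_ne_zero.mpr hxy) (star_ne_zero.mpr hq)
  rw [Pi.smul_apply, smul_eq_mul, div_mul_eq_mul_div, eq_div_iff hden]
  linear_combination -hpq

end RankOne

theorem Fin.sum_pow_succ_of_pow_eq_one {K : Type*} [Field K] [DecidableEq K] {N : ℕ} {z : K}
    (hz : z ^ N = 1) : ∑ p : Fin N, z ^ ((p : ℕ) + 1) = if z = 1 then (N : K) else 0 := by
  rw [Fin.sum_univ_eq_sum_range (fun p => z ^ (p + 1)) N]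
  split_ifs with h
  · simp [h]
  · simp_rw [pow_succ, ← Finset.sum_mul, geom_sum_eq h, hz, sub_self, zero_div, zero_mul]

theorem ite_sub_mul_sub_eq_zero_iff {N : ℕ} (hN : 4 < N) {u v : ℂ} (hu : ‖u‖ ≤ 1)
    (hv : ‖v‖ ≤ 1) :
    (if u * v = 1 then (N : ℂ) else 0) - (u - 1) * (v - 1) = 0 ↔ Xor (u = 1) (v = 1) := by
  split_ifs with huv
  · have hnorm : ‖(u - 1) * (v - 1)‖ ≤ 2 * 2 := by
      rw [norm_mul]
      gcongr <;> exact (norm_sub_le _ _).trans (by rw [norm_one]; linarith)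
    constructor
    · intro h
      rw [← sub_eq_zero.mp h, Complex.norm_natCast] at hnorm
      exact absurd hnorm (by norm_num; exact_mod_cast hN)
    · rintro (⟨rfl, hv⟩ | ⟨rfl, hu⟩) <;> simp_all
  · rw [zero_sub, neg_eq_zero, mul_eq_zero, sub_eq_zero, sub_eq_zero, xor_iff_or_and_not_and]
    exact ⟨fun h => ⟨h, fun ⟨hu, hv⟩ => huv (by rw [hu, hv, one_mul])⟩, And.left⟩

section RootOfUnity

variable {N : ℕ}

theorem omegaN_ne_zero : omegaN N ≠ 0 := Complex.exp_ne_zero _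

theorem norm_omegaN_zpow (m : ℤ) : ‖omegaN N ^ m‖ = 1 := by
  rw [norm_zpow, omegaN, show 2 * Real.pi * I / N = ((2 * Real.pi / N : ℝ) : ℂ) * I by
    push_cast; ring, Complex.norm_exp_ofReal_mul_I, _root_.one_zpow]

theorem star_omegaN_zpow (m : ℤ) : star (omegaN N ^ m) = omegaN N ^ (-m) := by
  rw [_root_.zpow_neg, Complex.inv_eq_conj (norm_omegaN_zpow m), Complex.star_def]

theorem isPrimitiveRoot_omegaN (hN : N ≠ 0) : IsPrimitiveRoot (omegaN N) N :=
  Complex.isPrimitiveRoot_exp N hN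

theorem omegaN_zpow_sub_eq_one_iff {a b : Fin N} : omegaN N ^ ((a : ℤ) - b) = 1 ↔ a = b := by
  have hN : N ≠ 0 := Fin.pos_iff_nonempty.mpr ⟨a⟩ |>.ne'
  rw [(isPrimitiveRoot_omegaN hN).zpow_eq_one_iff_dvd, Fin.ext_iff]
  constructor
  · intro h
    have := Int.eq_zero_of_dvd_of_natAbs_lt_natAbs h (by omega)
    omega
  · intro h
    simp [h]

end RootOfUnity

section MagicBasis

variable {N : ℕ}

theorem xiVec_apply_of_val_eq_zero (I J : ℤ) {p : Fin N} (hp : (p : ℕ) = 0) :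
    xiVec N I J p = omegaN N ^ (1 - J) / (Real.sqrt N : ℂ) := by
  simp [xiVec, hp]

theorem xiVec_apply_of_val_eq_sub_one (I J : ℤ) {p : Fin N} (hp0 : (p : ℕ) ≠ 0)
    (hp : (p : ℕ) = N - 1) : xiVec N I J p = omegaN N ^ (I - 1) / (Real.sqrt N : ℂ) := by
  rw [xiVec, PiLp.toLp_apply, if_neg hp0, if_pos hp]

theorem xiVec_apply_of_val_ne (I J : ℤ) {p : Fin N} (hp0 : (p : ℕ) ≠ 0) (hp : (p : ℕ) ≠ N - 1) :
    xiVec N I J p = omegaN N ^ (((p : ℕ) + 1 : ℤ) * (I - J)) / (Real.sqrt N : ℂ) := by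
  simp [xiVec, hp0, hp]

theorem natCast_mul_star_omegaN_zpow_div_mul (hN : N ≠ 0) (x y : ℤ) :
    (N : ℂ) * (star (omegaN N ^ x / (Real.sqrt N : ℂ)) * (omegaN N ^ y / (Real.sqrt N : ℂ))) =
      omegaN N ^ (y - x) := by
  rw [star_div₀, star_omegaN_zpow, Complex.star_def, Complex.conj_ofReal, div_mul_div_comm,
    ← Complex.ofReal_mul, Real.mul_self_sqrt (Nat.cast_nonneg N), Complex.ofReal_natCast,
    ← zpow_add₀ omegaN_ne_zero, mul_div_cancel₀ _ (Nat.cast_ne_zero.mpr hN), neg_add_eq_sub]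

theorem natCast_mul_star_xiVec_dotProduct (hN : 2 ≤ N) (I J K L : ℤ) :
    (N : ℂ) * (star ⇑(xiVec N I J) ⬝ᵥ ⇑(xiVec N K L)) =
      (if omegaN N ^ (J - L) * omegaN N ^ (K - I) = 1 then (N : ℂ) else 0) -
        (omegaN N ^ (J - L) - 1) * (omegaN N ^ (K - I) - 1) := by
  have hN0 : N ≠ 0 := by omega
  set z := omegaN N ^ (J - L) * omegaN N ^ (K - I) with hz_def
  have hz : ∀ m : ℕ, z ^ m = omegaN N ^ ((m : ℤ) * ((K - L) - (I - J))) := by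
    intro m
    rw [hz_def, ← zpow_add₀ omegaN_ne_zero, ← zpow_natCast, ← _root_.zpow_mul]
    ring_nf
  have hzN : z ^ N = 1 := by
    rw [hz, _root_.zpow_mul, zpow_natCast, (isPrimitiveRoot_omegaN hN0).pow_eq_one,
      _root_.one_zpow]
  set f : Fin N → ℂ := fun p => (N : ℂ) * (star (xiVec N I J p) * xiVec N K L p)
  let p₀ : Fin N := ⟨0, by omega⟩
  let p₁ : Fin N := ⟨N - 1, by omega⟩
  have h_bulk : ∀ p, p ≠ p₀ ∧ p ≠ p₁ → f p - z ^ ((p : ℕ) + 1) = 0 := by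
    rintro p ⟨hp₀, hp₁⟩
    have hp₀ : (p : ℕ) ≠ 0 := fun h => hp₀ (Fin.ext h)
    have hp₁ : (p : ℕ) ≠ N - 1 := fun h => hp₁ (Fin.ext h)
    simp only [f, xiVec_apply_of_val_ne _ _ hp₀ hp₁, natCast_mul_star_omegaN_zpow_div_mul hN0, hz]
    rw [sub_eq_zero]
    congr 1
    push_cast
    ring
  have h₀ : f p₀ - z ^ ((p₀ : ℕ) + 1) = omegaN N ^ (J - L) - z := by
    simp only [f, xiVec_apply_of_val_eq_zero _ _ (rfl : (p₀ : ℕ) = 0),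
      natCast_mul_star_omegaN_zpow_div_mul hN0, show (p₀ : ℕ) + 1 = 1 from rfl, pow_one]
    ring_nf
  have h₁ : f p₁ - z ^ ((p₁ : ℕ) + 1) = omegaN N ^ (K - I) - 1 := by
    have hp₁ : (p₁ : ℕ) ≠ 0 := by simp [p₁]; omega
    simp only [f, xiVec_apply_of_val_eq_sub_one _ _ hp₁ rfl,
      natCast_mul_star_omegaN_zpow_div_mul hN0, show (p₁ : ℕ) + 1 = N by simp [p₁]; omega, hzN]
    ring_nf
  calc (N : ℂ) * (star ⇑(xiVec N I J) ⬝ᵥ ⇑(xiVec N K L))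
      = ∑ p : Fin N, z ^ ((p : ℕ) + 1) + ∑ p, (f p - z ^ ((p : ℕ) + 1)) := by
        simp [dotProduct, Finset.mul_sum, f]
    _ = (if z = 1 then (N : ℂ) else 0) + ((omegaN N ^ (J - L) - z) + (omegaN N ^ (K - I) - 1)) := by
        rw [Fin.sum_pow_succ_of_pow_eq_one hzN,
          Fintype.sum_eq_add p₀ p₁ (by simp [p₀, p₁, Fin.ext_iff]; omega) h_bulk, h₀, h₁]
    _ = _ := by ring

theorem xiVec_ne_zero (hN : N ≠ 0) (I J : ℤ) : ⇑(xiVec N I J) ≠ 0 := by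
  intro h
  have h₀ := congrFun h ⟨0, Nat.pos_of_ne_zero hN⟩
  rw [xiVec_apply_of_val_eq_zero _ _ rfl, Pi.zero_apply, div_eq_zero_iff] at h₀
  exact h₀.elim (zpow_ne_zero _ omegaN_ne_zero) (by simpa [Real.sqrt_eq_zero'] using hN)

theorem star_xiVec_dotProduct_eq_zero_iff (hN : 5 ≤ N) (i j k l : Fin N) :
    star ⇑(xiVec N ((i : ℤ) + 1) ((j : ℤ) + 1)) ⬝ᵥ ⇑(xiVec N ((k : ℤ) + 1) ((l : ℤ) + 1)) = 0 ↔
      Xor (j = l) (k = i) := by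
  rw [← mul_right_inj' (Nat.cast_ne_zero.mpr (by omega) : (N : ℂ) ≠ 0), mul_zero,
    natCast_mul_star_xiVec_dotProduct (by omega), add_sub_add_right_eq_sub,
    add_sub_add_right_eq_sub, ite_sub_mul_sub_eq_zero_iff (by omega) (norm_omegaN_zpow _).le
    (norm_omegaN_zpow _).le, omegaN_zpow_sub_eq_one_iff, omegaN_zpow_sub_eq_one_iff]

theorem omegaN_zpow_eq_one_of_xiVec_eq_smul (hN : 4 ≤ N) {I J K L : ℤ} {c : ℂ}
    (h : ⇑(xiVec N K L) = c • ⇑(xiVec N I J)) : omegaN N ^ (J - L) = 1 := by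
  have hs : (Real.sqrt N : ℂ) ≠ 0 := by
    simpa [Real.sqrt_eq_zero'] using (show N ≠ 0 by omega)
  have h₀ : omegaN N ^ (1 - L) = c * omegaN N ^ (1 - J) := by
    have := congrFun h ⟨0, by omega⟩
    rwa [Pi.smul_apply, smul_eq_mul, xiVec_apply_of_val_eq_zero _ _ rfl,
      xiVec_apply_of_val_eq_zero _ _ rfl, ← mul_div_assoc, div_left_inj' hs] at this
  set X := omegaN N ^ (I - J)
  set Y := omegaN N ^ (K - L)
  have h_bulk : ∀ m : ℕ, m ≠ 0 → m + 1 < N → Y ^ (m + 1) = c * X ^ (m + 1) := by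
    intro m hm₀ hm
    have := congrFun h ⟨m, by omega⟩
    rw [Pi.smul_apply, smul_eq_mul, xiVec_apply_of_val_ne _ _ hm₀ (by simp; omega),
      xiVec_apply_of_val_ne _ _ hm₀ (by simp; omega), ← mul_div_assoc, div_left_inj' hs] at this
    simpa only [X, Y, ← zpow_natCast, ← _root_.zpow_mul, mul_comm, Nat.cast_succ] using this
  have h₂ := h_bulk 1 one_ne_zero (by omega)
  have h₃ := h_bulk 2 two_ne_zero (by omega)
  have hX : X ≠ 0 := zpow_ne_zero _ omegaN_ne_zero
  have hY : Y ≠ 0 := zpow_ne_zero _ omegaN_ne_zero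
  have hXY : Y = X := by
    have : Y ^ 2 * X * (Y - X) = 0 := by linear_combination X * h₃ - X ^ 2 * h₂
    exact sub_eq_zero.mp ((mul_eq_zero.mp this).resolve_left (by positivity))
  have hc : c = 1 := by
    have : (c - 1) * X ^ 2 = 0 := by linear_combination -h₂ + (Y + X) * hXY
    exact sub_eq_zero.mp ((mul_eq_zero.mp this).resolve_right (by positivity))
  rw [show J - L = (1 - L) - (1 - J) by ring, zpow_sub₀ omegaN_ne_zero, h₀, hc, one_mul,
    div_self (zpow_ne_zero _ omegaN_ne_zero)]

theorem flatV_eq_vecMulVec (i j : Fin N) :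
    flatV N i j = vecMulVec ⇑(xiVec N ((i : ℤ) + 1) ((j : ℤ) + 1))
      (star ⇑(xiVec N ((i : ℤ) + 1) ((j : ℤ) + 1))) :=
  rfl

end MagicBasis

theorem flatV_commute_iff (N : ℕ) (hN : 5 ≤ N) (i j k l : Fin N) :
    Commute (flatV N i j) (flatV N k l) ↔ i = k ∨ j = l := by
  have hdot := star_xiVec_dotProduct_eq_zero_iff hN i j k l
  rw [flatV_eq_vecMulVec, flatV_eq_vecMulVec]
  constructor
  · intro h
    by_contra! hne
    obtain ⟨c, hc⟩ := exists_eq_smul_of_commute_vecMulVec_star h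
      (by rw [Ne, hdot]; simp [hne.2, Ne.symm hne.1]) (xiVec_ne_zero (by omega) _ _)
    have hjl := omegaN_zpow_eq_one_of_xiVec_eq_smul (by omega) hc
    rw [add_sub_add_right_eq_sub, omegaN_zpow_sub_eq_one_iff] at hjl
    exact hne.2 hjl
  · intro h
    by_cases hjk : j = l ∧ k = i
    · obtain ⟨rfl, rfl⟩ := hjk
      exact Commute.refl _
    · exact commute_vecMulVec_star_of_dotProduct_eq_zero (hdot.mpr (by tauto))
end
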